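/- arXiv:math/0606635 — 2 statements merged into one kernel-verified Lean document; each statement's English description precedes it below -/
import Mathlib

section
/- There is no member of 𝓚 of minimum length; that is, there is no pair (p, q) with p < q, p and q in the Cantor set, and (p, q) disjoint from the Cantor set, such that q - p ≤ q' - p' for every pair (p', q') with p' < q', p' and q' in the Cantor set, and (p', q') disjoint from the Cantor set. -/
/-!
Shrinking by the factor `1/3` maps the Cantor set into itself, and on `[0, 1/3]` the inverse
map `x ↦ 3x` does too. Hence `(p/3, q/3)` is again a complementary interval whenever `(p, q)`
is one, and it is three times shorter.
-/

open Set

lemma div_three_mem_cantorSet {x : ℝ} (hx : x ∈ cantorSet) : x / 3 ∈ cantorSet := by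
  rw [cantorSet_eq_union_halves]
  exact Or.inl ⟨x, hx, rfl⟩

lemma three_mul_mem_cantorSet {x : ℝ} (hx : x ∈ cantorSet) (hx3 : x ≤ 1 / 3) :
    3 * x ∈ cantorSet := by
  have hx0 : 0 ≤ x := (cantorSet_subset_unitInterval hx).1
  have hstep := cantorStep_mem_cantorSet hx
  rwa [cantorStep, if_pos ⟨hx0, hx3⟩] at hstep

def IsCantorGap (p q : ℝ) : Prop :=
  p < q ∧ p ∈ cantorSet ∧ q ∈ cantorSet ∧ Disjoint (Ioo p q) cantorSet

lemma IsCantorGap.div_three {p q : ℝ} (h : IsCantorGap p q) : IsCantorGap (p / 3) (q / 3) := by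
  obtain ⟨hpq, hp, hq, hdisj⟩ := h
  have hq1 : q ≤ 1 := (cantorSet_subset_unitInterval hq).2
  refine ⟨by linarith, div_three_mem_cantorSet hp, div_three_mem_cantorSet hq, ?_⟩
  refine disjoint_left.mpr fun y ⟨hpy, hyq⟩ hy => disjoint_left.mp hdisj ?_
    (three_mul_mem_cantorSet hy (by linarith))
  exact ⟨by linarith, by linarith⟩

/-- There is no complementary interval of the Cantor set of minimum
length: no pair `(p, q)` with `p < q`, `p, q` in the Cantor set and `(p, q)` disjoint
from it, such that `q - p ≤ q' - p'` for every such pair `(p', q')`. -/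
theorem stmt_12 :
    ¬ ∃ p q : ℝ, (p < q ∧ p ∈ cantorSet ∧ q ∈ cantorSet ∧
        Disjoint (Set.Ioo p q) cantorSet) ∧
      ∀ p' q' : ℝ, (p' < q' ∧ p' ∈ cantorSet ∧ q' ∈ cantorSet ∧
          Disjoint (Set.Ioo p' q') cantorSet) → q - p ≤ q' - p' := by
  rintro ⟨p, q, hgap, hmin⟩
  have hshorter := hmin _ _ (IsCantorGap.div_three hgap)
  linarith [hgap.1]
end

section
/- The union over all n ≥ 2 of the triangles (convex hulls) with vertices X_n = (x_n, 0), B = (a, b), and X_1 = (x_1, 0) is a proper subset of the triangle (convex hull) with vertices A = (a, 0), B = (a, b), and X_1 = (x_1, 0); in particular, the point (a, b/2) belongs to the latter triangle but to none of the former. -/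
/-!
Each point `Xₙ` lies on the segment `A X₁`, so each triangle `Xₙ B X₁` lies in `A B X₁`. The
triangle `Xₙ B X₁` lies on the far side from `A` of the line through `Xₙ` and `B`, namely
`{p | b * xₙ ≤ b * p.1 + (xₙ - a) * p.2}`, and because `xₙ > a` the midpoint `(a, b/2)` of `AB`
lies strictly on the near side.
-/

open Filter Set Topology

theorem StrictAnti.lt_of_tendsto {α β : Type*} [TopologicalSpace α] [Preorder α]
    [OrderClosedTopology α] [PartialOrder β] [IsDirectedOrder β] [NoMaxOrder β] {f : β → α} {a : α}
    (hf : StrictAnti f) (ha : Tendsto f atTop (𝓝 a)) (b : β) : a < f b := by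
  obtain ⟨c, hbc⟩ := exists_gt b
  exact (hf.antitone.le_of_tendsto ha c).trans_lt (hf hbc)

theorem convexHull_insert_subset_of_mem_segment {𝕜 E : Type*} [Field 𝕜] [LinearOrder 𝕜]
    [IsStrictOrderedRing 𝕜] [AddCommGroup E] [Module 𝕜 E] {p q r s : E}
    (hp : p ∈ segment 𝕜 q s) : convexHull 𝕜 {p, r, s} ⊆ convexHull 𝕜 {q, r, s} := by
  refine convexHull_min ?_ (convex_convexHull 𝕜 _)
  refine insert_subset_iff.2 ⟨segment_subset_convexHull (by simp) (by simp) hp, ?_⟩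
  exact (subset_insert q {r, s}).trans (subset_convexHull 𝕜 _)

namespace Triangle

variable {a b c d : ℝ}

theorem mem_segment_inl (hac : a ≤ c) (hcd : c ≤ d) :
    ((c, 0) : ℝ × ℝ) ∈ segment ℝ (a, 0) (d, 0) := by
  have hc : c ∈ segment ℝ a d := by rw [segment_eq_Icc (hac.trans hcd)]; exact ⟨hac, hcd⟩
  simpa using image_segment ℝ (LinearMap.inl ℝ ℝ ℝ).toAffineMap a d ▸
    mem_image_of_mem (LinearMap.inl ℝ ℝ ℝ).toAffineMap hc

theorem convexHull_subset_halfPlane (hb : 0 ≤ b) (hcd : c ≤ d) :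
    convexHull ℝ ({(c, 0), (a, b), (d, 0)} : Set (ℝ × ℝ)) ⊆
      {p | b * c ≤ b * p.1 + (c - a) * p.2} := by
  have hlin : IsLinearMap ℝ fun p : ℝ × ℝ => b * p.1 + (c - a) * p.2 :=
    (b • LinearMap.fst ℝ ℝ ℝ + (c - a) • LinearMap.snd ℝ ℝ ℝ).isLinear
  refine convexHull_min ?_ (convex_halfSpace_ge hlin _)
  simp only [insert_subset_iff, singleton_subset_iff, mem_ofPred_eq]
  exact ⟨le_of_eq (by ring), le_of_eq (by ring), by nlinarith⟩

theorem notMem_convexHull (hb : 0 < b) (hac : a < c) (hcd : c ≤ d) :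
    ((a, b / 2) : ℝ × ℝ) ∉ convexHull ℝ ({(c, 0), (a, b), (d, 0)} : Set (ℝ × ℝ)) := by
  intro h
  have := convexHull_subset_halfPlane (a := a) hb.le hcd h
  simp only [mem_ofPred_eq] at this
  nlinarith [mul_pos hb (sub_pos.2 hac)]

theorem mem_convexHull_midpoint :
    ((a, b / 2) : ℝ × ℝ) ∈ convexHull ℝ ({(a, 0), (a, b), (d, 0)} : Set (ℝ × ℝ)) := by
  refine segment_subset_convexHull (x := (a, 0)) (y := (a, b)) (by simp) (by simp)
    ⟨1 / 2, 1 / 2, by norm_num, by norm_num, by norm_num, ?_⟩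
  ext <;> simp <;> ring

end Triangle

theorem stmt_13_general (x : ℕ → ℝ) (a b : ℝ)
    (hanti : StrictAnti x)
    (hlim : Filter.Tendsto x Filter.atTop (nhds a)) (hb : 0 < b) :
    (⋃ n : ℕ, convexHull ℝ ({(x (n + 1), 0), (a, b), (x 0, 0)} : Set (ℝ × ℝ)))
        ⊂ convexHull ℝ ({(a, 0), (a, b), (x 0, 0)} : Set (ℝ × ℝ)) ∧
      ((a, b / 2) : ℝ × ℝ) ∈ convexHull ℝ ({(a, 0), (a, b), (x 0, 0)} : Set (ℝ × ℝ)) ∧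
      ∀ n : ℕ, ((a, b / 2) : ℝ × ℝ) ∉
        convexHull ℝ ({(x (n + 1), 0), (a, b), (x 0, 0)} : Set (ℝ × ℝ)) := by
  have hax : ∀ n, a < x n := hanti.lt_of_tendsto hlim
  have hx0 : ∀ n, x (n + 1) ≤ x 0 := fun n => hanti.antitone (n + 1).zero_le
  have hnot : ∀ n : ℕ, ((a, b / 2) : ℝ × ℝ) ∉
      convexHull ℝ ({(x (n + 1), 0), (a, b), (x 0, 0)} : Set (ℝ × ℝ)) :=
    fun n => Triangle.notMem_convexHull hb (hax _) (hx0 n)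
  have hsub : (⋃ n : ℕ, convexHull ℝ ({(x (n + 1), 0), (a, b), (x 0, 0)} : Set (ℝ × ℝ)))
      ⊆ convexHull ℝ ({(a, 0), (a, b), (x 0, 0)} : Set (ℝ × ℝ)) :=
    iUnion_subset fun n => convexHull_insert_subset_of_mem_segment
      (Triangle.mem_segment_inl (hax _).le (hx0 n))
  refine ⟨hsub.ssubset_of_mem_notMem Triangle.mem_convexHull_midpoint ?_,
    Triangle.mem_convexHull_midpoint, hnot⟩
  simpa only [mem_iUnion, not_exists] using hnot

/-- The union over `n` of the triangles with vertices `Xₙ₊₂ = (x (n+1), 0)`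
(the terms after the first), `B = (a, b)` and `X₁ = (x 0, 0)` is a proper subset of the
triangle with vertices `A = (a, 0)`, `B`, `X₁`; in particular `(a, b/2)` belongs to the
latter triangle but to none of the former. -/
theorem stmt_13 (x : ℕ → ℝ) (a b : ℝ)
    (hpos : ∀ n, 0 < x n) (hanti : StrictAnti x)
    (hlim : Filter.Tendsto x Filter.atTop (nhds a)) (hb : 0 < b) :
    (⋃ n : ℕ, convexHull ℝ ({(x (n + 1), 0), (a, b), (x 0, 0)} : Set (ℝ × ℝ)))
        ⊂ convexHull ℝ ({(a, 0), (a, b), (x 0, 0)} : Set (ℝ × ℝ)) ∧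
      ((a, b / 2) : ℝ × ℝ) ∈ convexHull ℝ ({(a, 0), (a, b), (x 0, 0)} : Set (ℝ × ℝ)) ∧
      ∀ n : ℕ, ((a, b / 2) : ℝ × ℝ) ∉
        convexHull ℝ ({(x (n + 1), 0), (a, b), (x 0, 0)} : Set (ℝ × ℝ)) :=
  stmt_13_general x a b hanti hlim hb
end
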